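/- arXiv:1809.04881 — 7 statements merged into one kernel-verified Lean document; each statement's English description precedes it below -/
import Mathlib

section
/- Every play of the Zeckendorf game terminates: there is no infinite sequence of legal moves starting from the multiset consisting of n copies of F_1. -/
/-- Fibonacci numbers indexed `F_1 = 1, F_2 = 2, F_{i+1} = F_i + F_{i-1}`. -/
def ZFib (i : ℕ) : ℕ := Nat.fib (i + 1)

/-- Legal moves of the Zeckendorf game, on multisets of Fibonacci indices. -/
inductive ZMove : Multiset ℕ → Multiset ℕ → Prop
  | combine (s : Multiset ℕ) (i : ℕ) (h : 2 ≤ i) :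
      ZMove ((i - 1) ::ₘ i ::ₘ s) ((i + 1) ::ₘ s)
  | addOnes (s : Multiset ℕ) :
      ZMove (1 ::ₘ 1 ::ₘ s) (2 ::ₘ s)
  | splitTwos (s : Multiset ℕ) :
      ZMove (2 ::ₘ 2 ::ₘ s) (1 ::ₘ 3 ::ₘ s)
  | split (s : Multiset ℕ) (i : ℕ) (h : 3 ≤ i) :
      ZMove (i ::ₘ i ::ₘ s) ((i - 2) ::ₘ (i + 1) ::ₘ s)

/-! Every move other than splitting two `F_2`s lowers the sum of the indices plus the number
of summands; splitting two `F_2`s keeps that quantity and removes two `F_2`s. So the pair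
`zeckendorfRank` decreases lexicographically along every move, and a play would be an infinite
descending chain in a well-order. -/

def zeckendorfRank (s : Multiset ℕ) : ℕ ×ₗ ℕ :=
  toLex (s.sum + Multiset.card s, s.count 2)

theorem ZMove.rank_lt {s t : Multiset ℕ} (h : ZMove s t) :
    zeckendorfRank t < zeckendorfRank s := by
  rw [zeckendorfRank, zeckendorfRank, Prod.Lex.toLex_lt_toLex]
  cases h with
  | splitTwos s =>
    right
    simp only [Multiset.sum_cons, Multiset.card_cons, Multiset.count_cons_self,
      Multiset.count_cons_of_ne (by decide : (2 : ℕ) ≠ 1),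
      Multiset.count_cons_of_ne (by decide : (2 : ℕ) ≠ 3)]
    omega
  | combine s i hi | addOnes s | split s i hi =>
    left
    simp only [Multiset.sum_cons, Multiset.card_cons]
    omega

/-- Every play of the Zeckendorf game terminates: there is no infinite
sequence of legal moves starting from `n` copies of `F_1`. -/
theorem zeckendorf_game_terminates (n : ℕ) :
    ¬ ∃ f : ℕ → Multiset ℕ, f 0 = Multiset.replicate n 1 ∧
      ∀ m : ℕ, ZMove (f m) (f (m + 1)) := by
  rintro ⟨f, -, hf⟩
  obtain ⟨m, hm⟩ := WellFounded.not_rel_apply_succ (r := (· < ·)) (zeckendorfRank ∘ f)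
  exact hm (hf m).rank_lt
end

section
/- A state in the Zeckendorf game admits no legal move if and only if it consists of distinct, non-adjacent Fibonacci numbers (i.e., it is a Zeckendorf decomposition). -/
namespace ZMove

theorem exists_of_cons_cons_self {a : ℕ} (ha : 1 ≤ a) (s : Multiset ℕ) :
    ∃ t, ZMove (a ::ₘ a ::ₘ s) t := by
  rcases (by omega : a = 1 ∨ a = 2 ∨ 3 ≤ a) with rfl | rfl | h3
  · exact ⟨_, addOnes s⟩
  · exact ⟨_, splitTwos s⟩
  · exact ⟨_, split s a h3⟩

theorem exists_of_two_le_count {s : Multiset ℕ} {a : ℕ} (ha : 1 ≤ a) (h : 2 ≤ s.count a) :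
    ∃ t, ZMove s t := by
  have ha_mem : a ∈ s := Multiset.count_pos.1 (by omega)
  obtain ⟨s', rfl⟩ := Multiset.exists_cons_of_mem ha_mem
  rw [Multiset.count_cons_self] at h
  have ha_mem' : a ∈ s' := Multiset.count_pos.1 (by omega)
  obtain ⟨s'', rfl⟩ := Multiset.exists_cons_of_mem ha_mem'
  exact exists_of_cons_cons_self ha s''

theorem exists_of_mem_of_succ_mem {s : Multiset ℕ} {i : ℕ} (hi1 : 1 ≤ i) (hi : i ∈ s)
    (hsucc : i + 1 ∈ s) : ∃ t, ZMove s t := by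
  obtain ⟨s', rfl⟩ := Multiset.exists_cons_of_mem hsucc
  have hi' : i ∈ s' := (Multiset.mem_cons.1 hi).resolve_left (by omega)
  obtain ⟨s'', rfl⟩ := Multiset.exists_cons_of_mem hi'
  have hcombine := combine s'' (i + 1) (by omega)
  rw [Nat.add_sub_cancel, Multiset.cons_swap] at hcombine
  exact ⟨_, hcombine⟩

theorem not_zeckendorf {s t : Multiset ℕ} (h : ZMove s t) :
    ¬ (s.Nodup ∧ ∀ i ∈ s, i + 1 ∉ s) := by
  rintro ⟨hnd, hcons⟩
  cases h with
  | combine s i h =>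
    have hsucc : i - 1 + 1 = i := by omega
    exact hcons (i - 1) (Multiset.mem_cons_self _ _) (by simp [hsucc])
  | addOnes | splitTwos | split => simp at hnd

end ZMove

/-- A state (a multiset of indices ≥ 1) admits no legal move iff it is a
Zeckendorf decomposition: all indices distinct and no two consecutive. -/
theorem no_move_iff_zeckendorf (s : Multiset ℕ) (hs : ∀ i ∈ s, 1 ≤ i) :
    (¬ ∃ t, ZMove s t) ↔ (s.Nodup ∧ ∀ i ∈ s, i + 1 ∉ s) := by
  refine ⟨fun hno => ⟨Multiset.nodup_iff_count_le_one.2 fun a => ?_, fun i hi hsucc => ?_⟩,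
    fun hz ⟨t, hmove⟩ => hmove.not_zeckendorf hz⟩
  · by_contra! h
    exact hno (ZMove.exists_of_two_le_count (hs a (Multiset.count_pos.1 (by omega))) h)
  · exact hno (ZMove.exists_of_mem_of_succ_mem (hs i hi) hi hsucc)
end

section
/- Any maximal sequence of legal moves in the Zeckendorf game starting from n copies of F_1 ends at the (unique) Zeckendorf decomposition of n. -/
theorem ZFib_add_two (i : ℕ) : ZFib (i + 2) = ZFib i + ZFib (i + 1) := Nat.fib_add_two

theorem ZMove.sum_map_ZFib_eq {s t : Multiset ℕ} (h : ZMove s t) :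
    (t.map ZFib).sum = (s.map ZFib).sum := by
  cases h with
  | combine s i hi =>
    obtain ⟨k, rfl⟩ := Nat.exists_eq_add_of_le' hi
    simp only [Multiset.map_cons, Multiset.sum_cons, show k + 2 - 1 = k + 1 by omega,
      show k + 2 + 1 = (k + 1) + 2 by omega, ZFib_add_two]
    ring
  | addOnes s => simp [ZFib, Nat.fib_add_two]; ring
  | splitTwos s => simp [ZFib, Nat.fib_add_two]; ring
  | split s i hi =>
    obtain ⟨k, rfl⟩ := Nat.exists_eq_add_of_le' hi
    simp only [Multiset.map_cons, Multiset.sum_cons, show k + 3 - 2 = k + 1 by omega,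
      show k + 3 + 1 = (k + 2) + 2 by omega, show k + 3 = (k + 1) + 2 by omega, ZFib_add_two]
    ring

theorem ZMove.one_le_of_mem {s t : Multiset ℕ} (h : ZMove s t) (hs : ∀ i ∈ s, 1 ≤ i) :
    ∀ i ∈ t, 1 ≤ i := by
  cases h <;> simp only [Multiset.forall_mem_cons] at hs ⊢ <;> refine ⟨?_, ?_⟩ <;> grind

theorem one_le_and_sum_map_ZFib_eq_of_reflTransGen {n : ℕ} {s : Multiset ℕ}
    (h : Relation.ReflTransGen ZMove (Multiset.replicate n 1) s) :
    (∀ i ∈ s, 1 ≤ i) ∧ (s.map ZFib).sum = n := by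
  induction h with
  | refl => exact ⟨fun i hi => (Multiset.eq_of_mem_replicate hi).ge, by simp [ZFib]⟩
  | tail _ hmove ih => exact ⟨hmove.one_le_of_mem ih.1, hmove.sum_map_ZFib_eq.trans ih.2⟩

def IsZeckendorf (s : Multiset ℕ) : Prop :=
  s.Nodup ∧ (∀ i ∈ s, i + 1 ∉ s) ∧ ∀ i ∈ s, 1 ≤ i

theorem ZMove.exists_of_pair {a : ℕ} (ha : 1 ≤ a) (u : Multiset ℕ) :
    ∃ t, ZMove (a ::ₘ a ::ₘ u) t := by
  rcases (show a = 1 ∨ a = 2 ∨ 3 ≤ a by omega) with rfl | rfl | h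
  · exact ⟨_, .addOnes u⟩
  · exact ⟨_, .splitTwos u⟩
  · exact ⟨_, .split u a h⟩

theorem ZMove.exists_of_consecutive {i : ℕ} (hi : 1 ≤ i) (u : Multiset ℕ) :
    ∃ t, ZMove (i ::ₘ (i + 1) ::ₘ u) t :=
  ⟨_, by simpa using ZMove.combine u (i + 1) (by omega)⟩

theorem nodup_of_terminal {s : Multiset ℕ} (hs : ∀ i ∈ s, 1 ≤ i)
    (hterm : ¬ ∃ t, ZMove s t) : s.Nodup :=
  Multiset.nodup_iff_ne_cons_cons.mpr fun a u h =>
    hterm (h ▸ ZMove.exists_of_pair (hs a (by simp [h])) u)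

theorem succ_notMem_of_terminal {s : Multiset ℕ} (hs : ∀ i ∈ s, 1 ≤ i)
    (hterm : ¬ ∃ t, ZMove s t) : ∀ i ∈ s, i + 1 ∉ s := by
  intro i hi hi1
  obtain ⟨u, rfl⟩ := Multiset.exists_cons_of_mem hi
  have hi1' : i + 1 ∈ u := (Multiset.mem_cons.mp hi1).resolve_left (by omega)
  obtain ⟨v, rfl⟩ := Multiset.exists_cons_of_mem hi1'
  exact hterm (ZMove.exists_of_consecutive (hs i hi) v)

theorem isZeckendorf_of_terminal {s : Multiset ℕ} (hs : ∀ i ∈ s, 1 ≤ i)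
    (hterm : ¬ ∃ t, ZMove s t) : IsZeckendorf s :=
  ⟨nodup_of_terminal hs hterm, succ_notMem_of_terminal hs hterm, hs⟩

namespace IsZeckendorf

/- Mathlib's `List.IsZeckendorfRep` lists `Nat.fib` indices in strictly decreasing order and
`ZFib i = Nat.fib (i + 1)`, whence the shift and the descending sort. -/
theorem isZeckendorfRep_sort {s : Multiset ℕ} (hs : IsZeckendorf s) :
    ((s.map (· + 1)).sort (· ≥ ·)).IsZeckendorfRep := by
  obtain ⟨hnd, hadj, hpos⟩ := hs
  set L := (s.map (· + 1)).sort (· ≥ ·)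
  have hmem : ∀ a ∈ L, ∃ i ∈ s, i + 1 = a := by simp [L]
  have hL : L.Pairwise (fun a b => b + 2 ≤ a) := by
    have hLnd : L.Nodup := by
      rw [← Multiset.coe_nodup, Multiset.sort_eq]
      exact hnd.map (add_left_injective 1)
    refine ((Multiset.pairwise_sort _ _).and hLnd).imp_of_mem ?_
    rintro a b ha hb ⟨hge, hne⟩
    obtain ⟨i, hi, rfl⟩ := hmem a ha
    obtain ⟨j, hj, rfl⟩ := hmem b hb
    have : j + 1 ≠ i := fun h => hadj j hj (h ▸ hi)
    omega
  refine (List.pairwise_append.mpr ⟨hL, List.pairwise_singleton _ _, ?_⟩).isChain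
  intro a ha b hb
  obtain ⟨i, hi, rfl⟩ := hmem a ha
  simp only [List.mem_singleton] at hb
  have := hpos i hi
  omega

theorem sum_map_fib_sort (s : Multiset ℕ) :
    (((s.map (· + 1)).sort (· ≥ ·)).map Nat.fib).sum = (s.map ZFib).sum := by
  rw [← Multiset.sum_coe, ← Multiset.map_coe, Multiset.sort_eq, Multiset.map_map]
  rfl

theorem map_succ_eq_zeckendorf {s : Multiset ℕ} (hs : IsZeckendorf s) :
    s.map (· + 1) = ↑(Nat.zeckendorf (s.map ZFib).sum) := by
  rw [← sum_map_fib_sort, Nat.zeckendorf_sum_fib hs.isZeckendorfRep_sort, Multiset.sort_eq]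

theorem eq_of_sum_map_ZFib_eq {s t : Multiset ℕ} (hs : IsZeckendorf s) (ht : IsZeckendorf t)
    (h : (s.map ZFib).sum = (t.map ZFib).sum) : s = t :=
  Multiset.map_injective (add_left_injective 1) <| by
    rw [hs.map_succ_eq_zeckendorf, ht.map_succ_eq_zeckendorf, h]

end IsZeckendorf

/-- Any maximal sequence of legal moves from `n` copies of `F_1` ends at the
unique Zeckendorf decomposition of `n`. -/
theorem game_ends_at_zeckendorf (n : ℕ) (s : Multiset ℕ)
    (hreach : Relation.ReflTransGen ZMove (Multiset.replicate n 1) s)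
    (hterm : ¬ ∃ t, ZMove s t) :
    s.Nodup ∧ (∀ i ∈ s, i + 1 ∉ s) ∧ (∀ i ∈ s, 1 ≤ i) ∧ (s.map ZFib).sum = n ∧
      ∀ s' : Multiset ℕ, Relation.ReflTransGen ZMove (Multiset.replicate n 1) s' →
        (¬ ∃ t, ZMove s' t) → s' = s := by
  obtain ⟨hpos, hsum⟩ := one_le_and_sum_map_ZFib_eq_of_reflTransGen hreach
  have hzeck := isZeckendorf_of_terminal hpos hterm
  refine ⟨hzeck.1, hzeck.2.1, hpos, hsum, fun s' hreach' hterm' => ?_⟩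
  obtain ⟨hpos', hsum'⟩ := one_le_and_sum_map_ZFib_eq_of_reflTransGen hreach'
  exact (isZeckendorf_of_terminal hpos' hterm').eq_of_sum_map_ZFib_eq hzeck
    (hsum'.trans hsum.symm)
end

section
/- For every positive integer n there exists a sequence of exactly n − Z(n) legal moves in the Zeckendorf game taking the initial state of n copies of F_1 to the Zeckendorf decomposition of n, where Z(n) is the number of terms in that decomposition. -/
open Relation

/-!
Add the `n` chips `F_1` one at a time, keeping the pile in Zeckendorf form. A new `F_1` either
sits alone or merges with the `F_1` already present into `F_2`; whenever the new chip `F_j` then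
lands next to an `F_{j+1}`, the two merge into `F_{j+2}`. This carry cascade ends at a Zeckendorf
pile. Only merging moves are played; each preserves the value and removes exactly one chip, so the
play ends at the Zeckendorf decomposition of `n` after `n - Z(n)` moves.
-/

theorem Relation.ReflTransGen.exists_seq_of_measure {α : Type*} {r : α → α → Prop}
    (μ : α → ℕ) (hμ : ∀ a b, r a b → μ a = μ b + 1) {a b : α} (h : ReflTransGen r a b) :
    ∃ (L : ℕ) (f : ℕ → α), f 0 = a ∧ (∀ m < L, r (f m) (f (m + 1))) ∧ f L = b ∧
      L + μ b = μ a := by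
  induction h using ReflTransGen.head_induction_on with
  | refl => exact ⟨0, fun _ => b, rfl, nofun, rfl, zero_add _⟩
  | head hac _ ih =>
    obtain ⟨L, f, hf0, hf, hfL, hμL⟩ := ih
    refine ⟨L + 1, fun | 0 => _ | m + 1 => f m, rfl, ?_, hfL, by rw [hμ _ _ hac]; omega⟩
    rintro (_ | m) hm
    · rwa [← hf0] at hac
    · exact hf m (by omega)

theorem ZMove.cons {A B : Multiset ℕ} (a : ℕ) (h : ZMove A B) : ZMove (a ::ₘ A) (a ::ₘ B) := by
  cases h with
  | combine s i hi =>
    simpa only [Multiset.cons_swap a] using ZMove.combine (a ::ₘ s) i hi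
  | addOnes s => simpa only [Multiset.cons_swap a] using ZMove.addOnes (a ::ₘ s)
  | splitTwos s => simpa only [Multiset.cons_swap a] using ZMove.splitTwos (a ::ₘ s)
  | split s i hi => simpa only [Multiset.cons_swap a] using ZMove.split (a ::ₘ s) i hi

theorem ZMove.sum_map_zFib_eq {A B : Multiset ℕ} (h : ZMove A B) :
    (A.map ZFib).sum = (B.map ZFib).sum := by
  cases h with
  | combine s i hi =>
    obtain ⟨k, rfl⟩ : ∃ k, i = k + 2 := ⟨i - 2, by omega⟩
    simp only [ZFib, Multiset.map_cons, Multiset.sum_cons, Nat.add_one_sub_one, Nat.fib_add_two]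
    ring
  | addOnes s => simp [ZFib, Nat.fib_add_two, ← add_assoc]
  | splitTwos s => simp [ZFib, Nat.fib_add_two, ← add_assoc]
  | split s i hi =>
    obtain ⟨k, rfl⟩ : ∃ k, i = k + 3 := ⟨i - 3, by omega⟩
    simp [ZFib, Nat.fib_add_two, ← add_assoc]

def ZMerge (A B : Multiset ℕ) : Prop :=
  ZMove A B ∧ Multiset.card A = Multiset.card B + 1

theorem ZMerge.combine (s : Multiset ℕ) {j : ℕ} (hj : 1 ≤ j) :
    ZMerge (j ::ₘ (j + 1) ::ₘ s) ((j + 2) ::ₘ s) :=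
  ⟨by simpa using ZMove.combine s (j + 1) (by omega), by simp⟩

theorem ZMerge.addOnes (s : Multiset ℕ) : ZMerge (1 ::ₘ 1 ::ₘ s) (2 ::ₘ s) :=
  ⟨ZMove.addOnes s, by simp⟩

theorem ZMerge.cons {A B : Multiset ℕ} (a : ℕ) (h : ZMerge A B) : ZMerge (a ::ₘ A) (a ::ₘ B) :=
  ⟨h.1.cons a, by simp [h.2]⟩

theorem sum_map_zFib_eq_of_reflTransGen_zMerge {A B : Multiset ℕ}
    (h : ReflTransGen ZMerge A B) : (A.map ZFib).sum = (B.map ZFib).sum := by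
  induction h with
  | refl => rfl
  | tail _ hBC ih => exact ih.trans hBC.1.sum_map_zFib_eq

structure IsZeckendorf_s10 (S : Multiset ℕ) : Prop where
  nodup : S.Nodup
  succ_notMem : ∀ i ∈ S, i + 1 ∉ S
  one_le : ∀ i ∈ S, 1 ≤ i

namespace IsZeckendorf_s10

theorem zero : IsZeckendorf_s10 0 := ⟨Multiset.nodup_zero, nofun, nofun⟩

theorem of_cons {a : ℕ} {S : Multiset ℕ} (h : IsZeckendorf_s10 (a ::ₘ S)) : IsZeckendorf_s10 S :=
  ⟨(Multiset.nodup_cons.1 h.nodup).2,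
    fun i hi hi' => h.succ_notMem i (Multiset.mem_cons_of_mem hi) (Multiset.mem_cons_of_mem hi'),
    fun i hi => h.one_le i (Multiset.mem_cons_of_mem hi)⟩

theorem cons {j : ℕ} {S : Multiset ℕ} (h : IsZeckendorf_s10 S) (hj : 1 ≤ j) (hjS : j ∉ S)
    (hpred : j - 1 ∉ S) (hsucc : j + 1 ∉ S) : IsZeckendorf_s10 (j ::ₘ S) where
  nodup := Multiset.nodup_cons.2 ⟨hjS, h.nodup⟩
  succ_notMem i hi := by
    rcases Multiset.mem_cons.1 hi with rfl | hi
    · simp [hsucc]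
    · have : i ≠ j - 1 := fun hij => hpred (hij ▸ hi)
      simp only [Multiset.mem_cons, not_or]
      exact ⟨by omega, h.succ_notMem i hi⟩
  one_le i hi := by
    rcases Multiset.mem_cons.1 hi with rfl | hi
    exacts [hj, h.one_le i hi]

theorem exists_merges_cons {T : Multiset ℕ} (hT : IsZeckendorf_s10 T) {j : ℕ} (hj : 1 ≤ j)
    (hjT : j ∉ T) (hpred : j - 1 ∉ T) :
    ∃ Z, IsZeckendorf_s10 Z ∧ ReflTransGen ZMerge (j ::ₘ T) Z := by
  induction T using Multiset.strongInductionOn generalizing j with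
  | ih T ih =>
    by_cases hsucc : j + 1 ∈ T
    · obtain ⟨T', rfl⟩ := Multiset.exists_cons_of_mem hsucc
      have hT' := hT.of_cons
      have hnext : j + 2 ∉ T' := fun h =>
        hT.succ_notMem _ (Multiset.mem_cons_self _ _) (Multiset.mem_cons_of_mem h)
      have hself : j + 2 - 1 ∉ T' := (Multiset.nodup_cons.1 hT.nodup).1
      obtain ⟨Z, hZ, hplay⟩ := ih T' (Multiset.lt_cons_self _ _) hT' (by omega) hnext hself
      exact ⟨Z, hZ, ReflTransGen.head (ZMerge.combine T' hj) hplay⟩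
    · exact ⟨_, hT.cons hj hjT hpred hsucc, ReflTransGen.refl⟩

theorem exists_merges_one_cons {S : Multiset ℕ} (hS : IsZeckendorf_s10 S) :
    ∃ Z, IsZeckendorf_s10 Z ∧ ReflTransGen ZMerge (1 ::ₘ S) Z := by
  by_cases h1 : 1 ∈ S
  · obtain ⟨S', rfl⟩ := Multiset.exists_cons_of_mem h1
    have h2 : 2 ∉ S' := fun h =>
      hS.succ_notMem _ (Multiset.mem_cons_self _ _) (Multiset.mem_cons_of_mem h)
    obtain ⟨Z, hZ, hplay⟩ :=
      hS.of_cons.exists_merges_cons (j := 2) (by omega) h2 (Multiset.nodup_cons.1 hS.nodup).1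
    exact ⟨Z, hZ, ReflTransGen.head (ZMerge.addOnes S') hplay⟩
  · exact hS.exists_merges_cons le_rfl h1 fun h => absurd (hS.one_le 0 h) (by omega)

end IsZeckendorf_s10

theorem exists_merges_replicate_one (n : ℕ) :
    ∃ Z, IsZeckendorf_s10 Z ∧ ReflTransGen ZMerge (Multiset.replicate n 1) Z := by
  induction n with
  | zero => exact ⟨0, IsZeckendorf_s10.zero, ReflTransGen.refl⟩
  | succ n ih =>
    obtain ⟨Z, hZ, hplay⟩ := ih
    obtain ⟨Z', hZ', hplay'⟩ := hZ.exists_merges_one_cons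
    refine ⟨Z', hZ', ReflTransGen.trans ?_ hplay'⟩
    rw [Multiset.replicate_succ]
    exact hplay.lift _ fun _ _ h => h.cons 1

theorem exists_shortest_game_general (n : ℕ) :
    ∃ (L : ℕ) (f : ℕ → Multiset ℕ),
      f 0 = Multiset.replicate n 1 ∧
      (∀ m < L, ZMove (f m) (f (m + 1))) ∧
      (f L).Nodup ∧ (∀ i ∈ f L, i + 1 ∉ f L) ∧ (∀ i ∈ f L, 1 ≤ i) ∧
      ((f L).map ZFib).sum = n ∧
      L + Multiset.card (f L) = n := by
  obtain ⟨Z, hZ, hplay⟩ := exists_merges_replicate_one n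
  obtain ⟨L, f, hf0, hmoves, rfl, hcard⟩ :=
    hplay.exists_seq_of_measure Multiset.card fun _ _ h => h.2
  have hsum : ((f L).map ZFib).sum = n := by
    rw [← sum_map_zFib_eq_of_reflTransGen_zMerge hplay]
    simp [ZFib]
  exact ⟨L, f, hf0, fun m hm => (hmoves m hm).1, hZ.nodup, hZ.succ_notMem, hZ.one_le, hsum,
    by simpa using hcard⟩

/-- For every positive `n` there is a play of exactly `n - Z(n)` legal moves
from `n` copies of `F_1` to the Zeckendorf decomposition of `n`. -/
theorem exists_shortest_game (n : ℕ) (hn : 0 < n) :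
    ∃ (L : ℕ) (f : ℕ → Multiset ℕ),
      f 0 = Multiset.replicate n 1 ∧
      (∀ m < L, ZMove (f m) (f (m + 1))) ∧
      (f L).Nodup ∧ (∀ i ∈ f L, i + 1 ∉ f L) ∧ (∀ i ∈ f L, 1 ≤ i) ∧
      ((f L).map ZFib).sum = n ∧
      L + Multiset.card (f L) = n :=
  exists_shortest_game_general n
end

section
/- For every integer n > 3, there exist two sequences of legal moves in the Zeckendorf game from n copies of F_1 to the Zeckendorf decomposition of n whose lengths have opposite parities (one even, one odd). -/
/-- A complete game of the Zeckendorf game on `n`: a play of `L` legal moves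
from `n` copies of `F_1` ending at a state with no legal move. -/
def ZGame (n L : ℕ) (f : ℕ → Multiset ℕ) : Prop :=
  f 0 = Multiset.replicate n 1 ∧ (∀ m < L, ZMove (f m) (f (m + 1))) ∧
    ¬ ∃ t, ZMove (f L) t

/-!
The game always terminates, since `2 · (#pieces + Σ indices) + #{copies of F_2}` strictly
decreases along every move. Starting from `n ≥ 4` ones, the position `F_1 + F_3` plus `n - 4`
ones can be reached in two moves (`F_1 F_1 → F_2`, then `F_1 F_2 → F_3`) or in three
(`F_1 F_1 → F_2` twice, then `F_2 F_2 → F_1 F_3`); extending both by one common complete game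
from that position yields complete games of consecutive lengths.
-/

section MaximalPlay

variable {α : Type*} (r : α → α → Prop)

def IsMaximalPlay (s : α) (L : ℕ) (f : ℕ → α) : Prop :=
  f 0 = s ∧ (∀ m < L, r (f m) (f (m + 1))) ∧ ¬ ∃ t, r (f L) t

variable {r}

theorem IsMaximalPlay.cons {s t : α} {L : ℕ} {f : ℕ → α} (hst : r s t)
    (hf : IsMaximalPlay r t L f) :
    IsMaximalPlay r s (L + 1) (fun | 0 => s | m + 1 => f m) := by
  obtain ⟨hf0, hmoves, hend⟩ := hf
  refine ⟨rfl, ?_, hend⟩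
  rintro (_ | m) hm
  · simpa [hf0] using hst
  · exact hmoves m (by omega)

theorem exists_isMaximalPlay (hwf : WellFounded (flip r)) (s : α) :
    ∃ L f, IsMaximalPlay r s L f := by
  induction s using hwf.induction with
  | _ s ih =>
    by_cases hmove : ∃ t, r s t
    · obtain ⟨t, hst⟩ := hmove
      obtain ⟨L, f, hf⟩ := ih t hst
      exact ⟨L + 1, _, hf.cons hst⟩
    · exact ⟨0, fun _ => s, rfl, fun _ h => absurd h (Nat.not_lt_zero _), hmove⟩

end MaximalPlay

theorem zGame_iff_isMaximalPlay (n L : ℕ) (f : ℕ → Multiset ℕ) :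
    ZGame n L f ↔ IsMaximalPlay ZMove (Multiset.replicate n 1) L f :=
  Iff.rfl

def zPotential (s : Multiset ℕ) : ℕ :=
  2 * (Multiset.card s + s.sum) + s.count 2

theorem zPotential_lt_of_zMove {s t : Multiset ℕ} (h : ZMove s t) :
    zPotential t < zPotential s := by
  cases h <;>
    simp only [zPotential, Multiset.card_cons, Multiset.sum_cons, Multiset.count_cons] <;>
    split_ifs <;> omega

theorem wellFounded_flip_zMove : WellFounded (flip ZMove) :=
  Subrelation.wf zPotential_lt_of_zMove (InvImage.wf zPotential wellFounded_lt)

theorem exists_maximalPlays_consecutive_lengths (s : Multiset ℕ) :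
    ∃ L f g, IsMaximalPlay ZMove (1 ::ₘ 1 ::ₘ 1 ::ₘ 1 ::ₘ s) (L + 2) f ∧
      IsMaximalPlay ZMove (1 ::ₘ 1 ::ₘ 1 ::ₘ 1 ::ₘ s) (L + 3) g := by
  have start : ZMove (1 ::ₘ 1 ::ₘ 1 ::ₘ 1 ::ₘ s) (2 ::ₘ 1 ::ₘ 1 ::ₘ s) := .addOnes _
  have viaCombine : ZMove (2 ::ₘ 1 ::ₘ 1 ::ₘ s) (1 ::ₘ 3 ::ₘ s) := by
    simpa only [Multiset.cons_swap 1 2, Multiset.cons_swap 3 1] using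
      ZMove.combine (1 ::ₘ s) 2 le_rfl
  have viaOnes : ZMove (2 ::ₘ 1 ::ₘ 1 ::ₘ s) (2 ::ₘ 2 ::ₘ s) := by
    simpa only [Multiset.cons_swap 1 2] using ZMove.addOnes (2 ::ₘ s)
  have viaTwos : ZMove (2 ::ₘ 2 ::ₘ s) (1 ::ₘ 3 ::ₘ s) := .splitTwos s
  obtain ⟨L, f, hf⟩ := exists_isMaximalPlay wellFounded_flip_zMove (1 ::ₘ 3 ::ₘ s)
  exact ⟨L, _, _, (hf.cons viaCombine).cons start, ((hf.cons viaTwos).cons viaOnes).cons start⟩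

/-- For every `n > 3` there are two complete games whose lengths have
opposite parities. -/
theorem exists_games_opposite_parity (n : ℕ) (hn : 3 < n) :
    ∃ (L₁ L₂ : ℕ) (f g : ℕ → Multiset ℕ),
      ZGame n L₁ f ∧ ZGame n L₂ g ∧ Even L₁ ∧ Odd L₂ := by
  obtain ⟨k, rfl⟩ : ∃ k, n = k + 4 := ⟨n - 4, by omega⟩
  simp only [zGame_iff_isMaximalPlay, Multiset.replicate_succ]
  obtain ⟨L, f, g, hf, hg⟩ := exists_maximalPlays_consecutive_lengths (Multiset.replicate k 1)
  rcases Nat.even_or_odd L with hL | hL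
  · exact ⟨L + 2, L + 3, f, g, hf, hg, by simpa [parity_simps] using hL,
      by simpa [parity_simps] using hL⟩
  · exact ⟨L + 3, L + 2, g, f, hg, hf, by simpa [parity_simps] using hL,
      by simpa [parity_simps] using hL⟩
end

section
/- Every sequence of legal moves in the Zeckendorf game starting from n copies of F_1 has length at most ℓ·n, where ℓ is the index of the largest Fibonacci number not exceeding n. -/
theorem le_apply_zero_of_forall_succ_lt (g : ℕ → ℕ) (L : ℕ)
    (h : ∀ m < L, g (m + 1) < g m) : L ≤ g 0 := by
  suffices ∀ m ≤ L, m + g m ≤ g 0 by have := this L le_rfl; omega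
  intro m hm
  induction m with
  | zero => simp
  | succ k ih =>
    have := h k hm
    have := ih (by omega)
    omega

theorem apply_eq_apply_zero_of_forall_succ_eq {β : Type*} (g : ℕ → β) (L : ℕ)
    (h : ∀ m < L, g (m + 1) = g m) : ∀ m ≤ L, g m = g 0 := by
  intro m hm
  induction m with
  | zero => rfl
  | succ k ih => rw [h k hm, ih (by omega)]

theorem ZFib_one : ZFib 1 = 1 := rfl

theorem ZFib_two : ZFib 2 = 2 := rfl

theorem ZFib_three : ZFib 3 = 3 := rfl

theorem ZFib_succ {i : ℕ} (hi : 1 ≤ i) : ZFib (i + 1) = ZFib (i - 1) + ZFib i := by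
  obtain ⟨k, rfl⟩ := Nat.exists_eq_add_of_le' hi
  exact Nat.fib_add_two

theorem ZFib_mono : Monotone ZFib := fun _ _ h => Nat.fib_mono (Nat.succ_le_succ h)

def zeckValue (s : Multiset ℕ) : ℕ := (s.map ZFib).sum

@[simp]
theorem zeckValue_cons (a : ℕ) (s : Multiset ℕ) :
    zeckValue (a ::ₘ s) = ZFib a + zeckValue s := by
  simp [zeckValue]

theorem zeckValue_replicate_one (n : ℕ) : zeckValue (Multiset.replicate n 1) = n := by
  simp [zeckValue, Multiset.map_replicate, ZFib_one]

/-- A discrete stand-in for the weight `√i`: weights linear in `i` stay constant under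
`2, 2 → 1, 3`, so the weight of `1` is lowered. -/
def zeckWeight (i : ℕ) : ℕ := if i ≤ 1 then 3 else i + 3

def zeckPotential (s : Multiset ℕ) : ℕ := (s.map zeckWeight).sum

@[simp]
theorem zeckPotential_cons (a : ℕ) (s : Multiset ℕ) :
    zeckPotential (a ::ₘ s) = zeckWeight a + zeckPotential s := by
  simp [zeckPotential]

theorem zeckPotential_replicate_one (n : ℕ) : zeckPotential (Multiset.replicate n 1) = 3 * n := by
  simp [zeckPotential, Multiset.map_replicate, zeckWeight, mul_comm]

namespace ZMove

variable {s t : Multiset ℕ}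

theorem zeckPotential_lt (h : ZMove s t) : zeckPotential t < zeckPotential s := by
  cases h <;> simp only [zeckPotential_cons, zeckWeight] <;> split_ifs <;> omega

theorem zeckValue_eq (h : ZMove s t) : zeckValue t = zeckValue s := by
  cases h with
  | combine s i hi =>
    simp only [zeckValue_cons, ZFib_succ (by omega : 1 ≤ i)]
    omega
  | addOnes s => simp only [zeckValue_cons, ZFib_one, ZFib_two]; omega
  | splitTwos s => simp only [zeckValue_cons, ZFib_one, ZFib_two, ZFib_three]; omega
  | split s i hi =>
    have hi' : ZFib i = ZFib (i - 2) + ZFib (i - 1) := by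
      have := ZFib_succ (by omega : 1 ≤ i - 1)
      rwa [Nat.sub_add_cancel (by omega), Nat.sub_sub] at this
    simp only [zeckValue_cons, ZFib_succ (by omega : 1 ≤ i)]
    omega

theorem card_lt_of_zeckValue_lt_four (h : ZMove s t) (hs : zeckValue s < 4) :
    Multiset.card t < Multiset.card s := by
  cases h with
  | combine s i hi => simp
  | addOnes s => simp
  | splitTwos s => simp only [zeckValue_cons, ZFib_two] at hs; omega
  | split s i hi =>
    have := ZFib_mono hi
    simp only [zeckValue_cons, ZFib_three] at hs this
    omega

end ZMove

theorem game_length_upper_bound_general (n ℓ L : ℕ) (f : ℕ → Multiset ℕ)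
    (hn : 0 < n)
    (hmax : ∀ j : ℕ, ZFib j ≤ n → j ≤ ℓ)
    (h0 : f 0 = Multiset.replicate n 1)
    (hmoves : ∀ m < L, ZMove (f m) (f (m + 1))) :
    L ≤ ℓ * n := by
  have hℓ : 1 ≤ ℓ := hmax 1 (by rw [ZFib_one]; omega)
  rcases le_or_gt 3 ℓ with hℓ3 | hℓ3
  · have hL : L ≤ 3 * n := by
      rw [← zeckPotential_replicate_one, ← h0]
      exact le_apply_zero_of_forall_succ_lt (fun m => zeckPotential (f m)) L fun m hm =>
        (hmoves m hm).zeckPotential_lt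
    exact hL.trans (Nat.mul_le_mul_right n hℓ3)
  · have hn3 : n < 3 := by
      by_contra! h3
      have := hmax 3 (by rwa [ZFib_three])
      omega
    have hvalue : ∀ m ≤ L, zeckValue (f m) = n := fun m hm => by
      rw [apply_eq_apply_zero_of_forall_succ_eq (fun m => zeckValue (f m)) L
        (fun k hk => (hmoves k hk).zeckValue_eq) m hm, h0, zeckValue_replicate_one]
    have hL : L ≤ n := by
      rw [← Multiset.card_replicate n 1, ← h0]
      exact le_apply_zero_of_forall_succ_lt (fun m => Multiset.card (f m)) L fun m hm =>
        (hmoves m hm).card_lt_of_zeckValue_lt_four (by rw [hvalue m hm.le]; omega)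
    exact hL.trans (Nat.le_mul_of_pos_left n hℓ)

/-- Every sequence of legal moves starting from `n` copies of `F_1` has length
at most `ℓ · n`, where `ℓ` is the index of the largest Fibonacci number not
exceeding `n`. -/
theorem game_length_upper_bound (n ℓ L : ℕ) (f : ℕ → Multiset ℕ)
    (hn : 0 < n)
    (hℓ : ZFib ℓ ≤ n) (hmax : ∀ j : ℕ, ZFib j ≤ n → j ≤ ℓ)
    (h0 : f 0 = Multiset.replicate n 1)
    (hmoves : ∀ m < L, ZMove (f m) (f (m + 1))) :
    L ≤ ℓ * n :=
  game_length_upper_bound_general n ℓ L f hn hmax h0 hmoves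
end

section
/- The sum of square roots of indices monovariant is strictly decreasing along any play of the Zeckendorf game: if state T is obtained from state S by a legal move, then the sum over the multiset T of √(index) is strictly less than the corresponding sum over S. -/
/-!
A combining move replaces two indices by one index at most their sum, and `√` is strictly
subadditive on positive reals. A splitting move replaces two equal indices `i, i` by two distinct
indices with sum at most `2 i`, and `√` is strictly concave.
-/

namespace Real

theorem sqrt_lt_sqrt_add_sqrt_of_le_add {a b c : ℝ} (ha : 0 < a) (hb : 0 < b) (hc : c ≤ a + b) :
    √c < √a + √b :=
  calc √c ≤ √(a + b) := sqrt_le_sqrt hc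
    _ < √a + √b := by
      rw [sqrt_lt' (by positivity)]
      nlinarith [sq_sqrt ha.le, sq_sqrt hb.le, mul_pos (sqrt_pos.2 ha) (sqrt_pos.2 hb)]

theorem sqrt_add_sqrt_lt_two_mul_sqrt {a b c : ℝ} (ha : 0 ≤ a) (hb : 0 ≤ b) (hab : a ≠ b)
    (hc : a + b ≤ 2 * c) : √a + √b < 2 * √c := by
  have hmid : 1 / 2 * √a + 1 / 2 * √b < √(1 / 2 * a + 1 / 2 * b) :=
    strictConcaveOn_sqrt.2 (Set.mem_Ici.2 ha) (Set.mem_Ici.2 hb) hab (by norm_num) (by norm_num)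
      (by norm_num)
  calc √a + √b = 2 * (1 / 2 * √a + 1 / 2 * √b) := by ring
    _ < 2 * √(1 / 2 * a + 1 / 2 * b) := by gcongr
    _ ≤ 2 * √c := by gcongr; linarith

end Real

-- Here `a ::ₘ s` is lifted to `Multiset ℝ` by the multiset monad, not mapped by `Nat.cast`.
theorem sum_map_sqrt_cons (a : ℕ) (s : Multiset ℕ) :
    ((a ::ₘ s).map fun i => Real.sqrt i).sum = Real.sqrt a + (s.map fun i => Real.sqrt i).sum := by
  simp only [Multiset.pure_def, Multiset.bind_def, Multiset.bind_singleton, Multiset.map_cons,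
    Multiset.map_map, Function.comp_apply, Multiset.sum_cons]

/-- The sum of square roots of indices is a strictly decreasing monovariant:
each legal move strictly decreases it. -/
theorem monovariant_strict_decrease (s t : Multiset ℕ) (h : ZMove s t) :
    (t.map fun i => Real.sqrt i).sum < (s.map fun i => Real.sqrt i).sum := by
  cases h with
  | combine s i hi =>
    have hc : √((i + 1 : ℕ) : ℝ) < √((i - 1 : ℕ) : ℝ) + √(i : ℝ) :=
      Real.sqrt_lt_sqrt_add_sqrt_of_le_add (by exact_mod_cast (by omega : 0 < i - 1))
        (by exact_mod_cast (by omega : 0 < i)) (by exact_mod_cast (by omega : i + 1 ≤ i - 1 + i))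
    simp only [sum_map_sqrt_cons]
    linarith
  | addOnes s =>
    have hc : √((2 : ℕ) : ℝ) < √((1 : ℕ) : ℝ) + √((1 : ℕ) : ℝ) :=
      Real.sqrt_lt_sqrt_add_sqrt_of_le_add (by norm_num) (by norm_num) (by norm_num)
    simp only [sum_map_sqrt_cons]
    linarith
  | splitTwos s =>
    have hc : √((1 : ℕ) : ℝ) + √((3 : ℕ) : ℝ) < 2 * √((2 : ℕ) : ℝ) :=
      Real.sqrt_add_sqrt_lt_two_mul_sqrt (by norm_num) (by norm_num) (by norm_num) (by norm_num)
    simp only [sum_map_sqrt_cons]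
    linarith
  | split s i hi =>
    have hc : √((i - 2 : ℕ) : ℝ) + √((i + 1 : ℕ) : ℝ) < 2 * √(i : ℝ) :=
      Real.sqrt_add_sqrt_lt_two_mul_sqrt (Nat.cast_nonneg _) (Nat.cast_nonneg _)
        (by exact_mod_cast (by omega : i - 2 ≠ i + 1))
        (by exact_mod_cast (by omega : i - 2 + (i + 1) ≤ 2 * i))
    simp only [sum_map_sqrt_cons]
    linarith
end
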